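/- arXiv:1802.08613 — 2 statements merged into one kernel-verified Lean document; each statement's English description precedes it below -/
import Mathlib

section
/- Let ℓ : ℝ^d → ℝ be convex with L-Lipschitz gradient attaining its minimum at θ*. Under the accelerated inexact gradient method with α_k λ_k ≤ β_k < 1/L and the sequence {α_k/(λ_k Γ_k)} non-increasing, for any N ≥ 1, ℓ(θ_N^{ag}) − ℓ(θ*) ≤ Γ_N [ ‖θ_0 − θ*‖² / λ_1 + Σ_{k=1}^{N} Γ_k^{-1} ( β_k ‖ε_k‖ ‖∇ℓ(θ_k^{md}) + ε_k‖ + α_k ‖ε_k‖ ‖θ_{k-1} − θ*‖ ) ]. -/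
open RealInnerProductSpace


open RealInnerProductSpace

variable {d : ℕ}

lemma aig_deriv (ℓ : EuclideanSpace ℝ (Fin d) → ℝ) (G : EuclideanSpace ℝ (Fin d) → EuclideanSpace ℝ (Fin d))
    (hgrad : ∀ θ, HasGradientAt ℓ (G θ) θ) (x v : EuclideanSpace ℝ (Fin d)) (t : ℝ) :
    HasDerivAt (fun s : ℝ => ℓ (x + s • v)) ⟪G (x + t • v), v⟫ t := by
  have hc : HasDerivAt (fun s : ℝ => x + s • v) v t := by
    simpa using ((hasDerivAt_id t).smul_const v).const_add x
  have h := ((hgrad (x + t • v)).hasFDerivAt.comp_hasDerivAt t hc)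
  simp [InnerProductSpace.toDual_apply_apply] at h
  exact h

lemma aig_convex_lb (ℓ : EuclideanSpace ℝ (Fin d) → ℝ) (G : EuclideanSpace ℝ (Fin d) → EuclideanSpace ℝ (Fin d))
    (hgrad : ∀ θ, HasGradientAt ℓ (G θ) θ) (hconv : ConvexOn ℝ Set.univ ℓ)
    (x y : EuclideanSpace ℝ (Fin d)) :
    ℓ x + ⟪G x, y - x⟫ ≤ ℓ y := by
  set φ : ℝ → ℝ := fun s => ℓ (x + s • (y - x)) with hφ
  have hd : HasDerivAt φ ⟪G x, y - x⟫ 0 := by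
    simpa using aig_deriv ℓ G hgrad x (y - x) 0
  have hslope : Filter.Tendsto (slope φ 0) (nhdsWithin 0 (Set.Ioi 0)) (nhds ⟪G x, y - x⟫) :=
    (hasDerivAt_iff_tendsto_slope.1 hd).mono_left
      (nhdsWithin_mono 0 (fun t ht => ne_of_gt ht))
  have hev : ∀ᶠ t in nhdsWithin (0:ℝ) (Set.Ioi 0), slope φ 0 t ≤ ℓ y - ℓ x := by
    filter_upwards [Ioc_mem_nhdsGT_of_mem (Set.mem_Ico.2 ⟨le_refl (0:ℝ), zero_lt_one⟩)]
      with t ht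
    have hcomb : φ t ≤ (1 - t) * ℓ x + t * ℓ y := by
      have h1 : x + t • (y - x) = (1 - t) • x + t • y := by
        rw [smul_sub, sub_smul, one_smul]; abel
      have := hconv.2 (Set.mem_univ x) (Set.mem_univ y)
        (by linarith [ht.2] : (0:ℝ) ≤ 1 - t) (le_of_lt ht.1) (by ring)
      show ℓ (x + t • (y - x)) ≤ _
      rw [h1]; simpa using this
    have ht0 : (0:ℝ) < t := ht.1
    have hφ0 : φ 0 = ℓ x := by simp [hφ]
    rw [slope_def_field, sub_zero, div_le_iff₀ ht0]
    nlinarith [hcomb, hφ0]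
  exact by linarith [le_of_tendsto hslope hev]

lemma aig_descent (ℓ : EuclideanSpace ℝ (Fin d) → ℝ) (G : EuclideanSpace ℝ (Fin d) → EuclideanSpace ℝ (Fin d))
    (L : ℝ) (hgrad : ∀ θ, HasGradientAt ℓ (G θ) θ)
    (hLip : ∀ θ ϑ, ‖G θ - G ϑ‖ ≤ L * ‖θ - ϑ‖)
    (x y : EuclideanSpace ℝ (Fin d)) :
    ℓ y ≤ ℓ x + ⟪G x, y - x⟫ + L / 2 * ‖y - x‖ ^ 2 := by
  set v := y - x with hv
  set c1 : ℝ := ⟪G x, v⟫ with hc1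
  set c2 : ℝ := L / 2 * ‖v‖ ^ 2 with hc2
  set u : ℝ → ℝ := fun s => ℓ (x + s • v) - s * c1 - s ^ 2 * c2 with hu
  have hud : ∀ t : ℝ, HasDerivAt u (⟪G (x + t • v), v⟫ - c1 - 2 * t * c2) t := by
    intro t
    have h1 := aig_deriv ℓ G hgrad x v t
    have h2 : HasDerivAt (fun s : ℝ => s * c1) c1 t := by
      simpa using (hasDerivAt_id t).mul_const c1
    have h3 : HasDerivAt (fun s : ℝ => s ^ 2 * c2) (2 * t * c2) t := by
      have := (hasDerivAt_pow 2 t).mul_const c2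
      simpa [mul_comm] using this
    exact (h1.sub h2).sub h3
  have hanti : AntitoneOn u (Set.Icc 0 1) := by
    apply antitoneOn_of_hasDerivWithinAt_nonpos (convex_Icc 0 1)
      (fun s _ => (hud s).continuousAt.continuousWithinAt)
      (f' := fun t => ⟪G (x + t • v), v⟫ - c1 - 2 * t * c2)
      (fun s hs => (hud s).hasDerivWithinAt)
    intro t ht
    rw [interior_Icc] at ht
    have hcs : ⟪G (x + t • v) - G x, v⟫ ≤ ‖G (x + t • v) - G x‖ * ‖v‖ :=
      real_inner_le_norm _ _
    have hlip : ‖G (x + t • v) - G x‖ ≤ L * (t * ‖v‖) := by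
      have := hLip (x + t • v) x
      simpa [norm_smul, abs_of_pos ht.1, mul_assoc] using this
    have hvn : (0:ℝ) ≤ ‖v‖ := norm_nonneg _
    have : ⟪G (x + t • v), v⟫ - c1 ≤ L * t * ‖v‖ ^ 2 := by
      rw [inner_sub_left] at hcs
      nlinarith
    rw [hc2]
    nlinarith
  have h10 := hanti (Set.mem_Icc.2 ⟨le_refl (0:ℝ), zero_le_one⟩)
    (Set.mem_Icc.2 ⟨zero_le_one, le_refl (1:ℝ)⟩) zero_le_one
  have hu1 : u 1 = ℓ y - c1 - c2 := by
    simp [hu, hv]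
  have hu0 : u 0 = ℓ x := by simp [hu]
  rw [hu1, hu0] at h10
  rw [hc1, hc2] at h10
  linarith

set_option maxHeartbeats 1000000

/-- Convex case of the accelerated inexact gradient theorem (stated for minimization of
the convex function, equivalently maximization in the paper): with
`α k λ k ≤ β k < 1/L` and `{α k/(λ k Γ k)}` non-increasing, for any `N ≥ 1`,
`ℓ(θ_N^{ag}) - ℓ(θ*) ≤ Γ_N [‖θ₀-θ*‖²/λ₁ + ∑_{k=1}^N Γ_k⁻¹ (β_k ‖ε_k‖ ‖∇ℓ(θ_k^{md})+ε_k‖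
 + α_k ‖ε_k‖ ‖θ_{k-1}-θ*‖)]`. -/
theorem stmt_13 {d : ℕ}
    (ℓ : EuclideanSpace ℝ (Fin d) → ℝ)
    (G : EuclideanSpace ℝ (Fin d) → EuclideanSpace ℝ (Fin d))
    (L : ℝ) (hL : 0 < L)
    (hgrad : ∀ θ, HasGradientAt ℓ (G θ) θ)
    (hLip : ∀ θ ϑ, ‖G θ - G ϑ‖ ≤ L * ‖θ - ϑ‖)
    (hconv : ConvexOn ℝ Set.univ ℓ)
    (θstar : EuclideanSpace ℝ (Fin d))
    (hopt : ∀ θ, ℓ θstar ≤ ℓ θ)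
    (α Γ lam β : ℕ → ℝ)
    (hα1 : α 1 = 1)
    (hα : ∀ k, 2 ≤ k → α k ∈ Set.Ioo (0 : ℝ) 1)
    (hΓ1 : Γ 1 = 1)
    (hΓ : ∀ k, 2 ≤ k → Γ k = (1 - α k) * Γ (k - 1))
    (hlam : ∀ k, 1 ≤ k → 0 < lam k)
    (hβpos : ∀ k, 1 ≤ k → 0 < β k)
    (hstep : ∀ k, 1 ≤ k → α k * lam k ≤ β k ∧ β k < 1 / L)
    (hmono : ∀ k, 1 ≤ k → α (k + 1) / (lam (k + 1) * Γ (k + 1)) ≤ α k / (lam k * Γ k))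
    (θ θag θmd ε : ℕ → EuclideanSpace ℝ (Fin d))
    (h0 : θag 0 = θ 0)
    (hmd : ∀ k, 1 ≤ k → θmd k = (1 - α k) • θag (k - 1) + α k • θ (k - 1))
    (hθ : ∀ k, 1 ≤ k → θ k = θ (k - 1) - lam k • (G (θmd k) + ε k))
    (hag : ∀ k, 1 ≤ k → θag k = θmd k - β k • (G (θmd k) + ε k)) :
    ∀ N : ℕ, 1 ≤ N →
      ℓ (θag N) - ℓ θstar
        ≤ Γ N * (‖θ 0 - θstar‖ ^ 2 / lam 1
            + ∑ k ∈ Finset.Icc 1 N, (Γ k)⁻¹ *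
                (β k * ‖ε k‖ * ‖G (θmd k) + ε k‖
                  + α k * ‖ε k‖ * ‖θ (k - 1) - θstar‖)) := by
    -- abbreviations
  set r : ℕ → ℝ := fun k => ‖θ k - θstar‖ ^ 2 with hrdef
  set s : ℕ → ℝ := fun k => α k / (lam k * Γ k) with hsdef
  -- basic positivity
  have hαpos : ∀ k, 1 ≤ k → 0 < α k := by
    intro k hk
    rcases eq_or_lt_of_le hk with h | h
    · rw [← h]; rw [hα1]; norm_num
    · exact (hα k h).1
  have hαlt : ∀ k, 2 ≤ k → α k < 1 := fun k hk => (hα k hk).2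
  have hαle : ∀ k, 1 ≤ k → α k ≤ 1 := by
    intro k hk
    rcases eq_or_lt_of_le hk with h | h
    · rw [← h, hα1]
    · exact le_of_lt (hαlt k h)
  have hΓpos : ∀ k, 1 ≤ k → 0 < Γ k := by
    intro k hk
    induction k with
    | zero => omega
    | succ n ih =>
      rcases Nat.lt_or_ge n 1 with h | h
      · interval_cases n
        · rw [hΓ1]; norm_num
      · have h2 : 2 ≤ n + 1 := by omega
        rw [hΓ (n+1) h2]
        have h3 := hαlt (n+1) h2
        have h4 : 0 < 1 - α (n+1) := by linarith
        have hΓn := ih h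
        simp only [Nat.add_sub_cancel]
        positivity
  have hspos : ∀ k, 1 ≤ k → 0 < s k := by
    intro k hk
    have := hαpos k hk; have := hlam k hk; have := hΓpos k hk
    rw [hsdef]; positivity
  have hrnn : ∀ k, 0 ≤ r k := fun k => by rw [hrdef]; positivity
  -- key per-step inequality
  have key : ∀ k, 1 ≤ k →
      ℓ (θag k) - ℓ θstar ≤ (1 - α k) * (ℓ (θag (k - 1)) - ℓ θstar)
        + α k / (2 * lam k) * (r (k - 1) - r k)
        + (β k * ‖ε k‖ * ‖G (θmd k) + ε k‖ + α k * ‖ε k‖ * ‖θ (k - 1) - θstar‖) := by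
    intro k hk
    have hl := hlam k hk
    have hb := hβpos k hk
    have ha := hαpos k hk
    have ha1 := hαle k hk
    have hs1 := (hstep k hk).1
    have hs2 : L * β k ≤ 1 := by
      have h := (hstep k hk).2
      rw [lt_div_iff₀ hL] at h
      nlinarith
    set gk : EuclideanSpace ℝ (Fin d) := G (θmd k) + ε k with hgk
    -- smoothness
    have F1 : ℓ (θag k) ≤ ℓ (θmd k) - β k * ⟪G (θmd k), gk⟫ + L * β k ^ 2 / 2 * ‖gk‖ ^ 2 := by
      have h := aig_descent ℓ G L hgrad hLip (θmd k) (θag k)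
      have hda : θag k - θmd k = -(β k • gk) := by rw [hag k hk]; abel
      rw [hda] at h
      have h1 : ⟪G (θmd k), -(β k • gk)⟫ = -(β k * ⟪G (θmd k), gk⟫) := by
        rw [inner_neg_right, real_inner_smul_right]
      have h2 : ‖-(β k • gk)‖ ^ 2 = β k ^ 2 * ‖gk‖ ^ 2 := by
        rw [norm_neg, norm_smul, Real.norm_eq_abs, mul_pow, sq_abs]
      rw [h1, h2] at h
      calc ℓ (θag k) ≤ _ := h
        _ = _ := by ring
    -- convexity
    have F2 : ℓ (θmd k) ≤ (1 - α k) * ℓ (θag (k - 1)) + α k * ℓ θstar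
        + α k * ⟪G (θmd k), θ (k - 1) - θstar⟫ := by
      have c1 := aig_convex_lb ℓ G hgrad hconv (θmd k) (θag (k - 1))
      have c2 := aig_convex_lb ℓ G hgrad hconv (θmd k) θstar
      have h1a : (0:ℝ) ≤ 1 - α k := by linarith
      have hvec : (1 - α k) • (θag (k-1) - θmd k) + α k • (θstar - θmd k)
          = α k • (θstar - θ (k - 1)) := by
        rw [hmd k hk]
        module
      have hinner : (1 - α k) * ⟪G (θmd k), θag (k-1) - θmd k⟫
          + α k * ⟪G (θmd k), θstar - θmd k⟫
          = α k * ⟪G (θmd k), θstar - θ (k - 1)⟫ := by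
        rw [← real_inner_smul_right, ← real_inner_smul_right, ← real_inner_smul_right,
          ← inner_add_right, hvec]
      have hflipm : α k * ⟪G (θmd k), θstar - θ (k - 1)⟫
          = -(α k * ⟪G (θmd k), θ (k - 1) - θstar⟫) := by
        have : θstar - θ (k-1) = -(θ (k-1) - θstar) := by abel
        rw [this, inner_neg_right]; ring
      linarith [mul_le_mul_of_nonneg_left c1 h1a, mul_le_mul_of_nonneg_left c2 ha.le,
        hinner, hflipm]
    -- step identity
    have hup : θ k - θstar = (θ (k - 1) - θstar) - lam k • gk := by
      rw [hθ k hk]; abel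
    have hnorm : r k = r (k - 1) - 2 * lam k * ⟪gk, θ (k - 1) - θstar⟫
        + lam k ^ 2 * ‖gk‖ ^ 2 := by
      rw [hrdef]
      simp only
      rw [hup, norm_sub_sq_real, real_inner_smul_right, norm_smul, Real.norm_eq_abs,
        mul_pow, sq_abs, real_inner_comm]
      ring
    have h2l : (2 * lam k) ≠ 0 := by positivity
    have hrr : r (k-1) - r k
        = 2 * lam k * (⟪gk, θ (k - 1) - θstar⟫ - lam k / 2 * ‖gk‖ ^ 2) := by
      linear_combination (-1 : ℝ) * hnorm
    have F3 : ⟪gk, θ (k - 1) - θstar⟫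
        = (r (k - 1) - r k) / (2 * lam k) + lam k / 2 * ‖gk‖ ^ 2 := by
      rw [hrr, mul_div_cancel_left₀ _ h2l]; ring
    have hdiv : α k * ⟪gk, θ (k - 1) - θstar⟫
        = α k / (2 * lam k) * (r (k - 1) - r k) + α k * lam k / 2 * ‖gk‖ ^ 2 := by
      rw [F3]; ring
    -- Cauchy-Schwarz bounds
    have F4 : ⟪ε k, gk⟫ ≤ ‖ε k‖ * ‖gk‖ := real_inner_le_norm _ _
    have F5 : -⟪ε k, θ (k - 1) - θstar⟫ ≤ ‖ε k‖ * ‖θ (k - 1) - θstar‖ := by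
      have h1 := abs_real_inner_le_norm (ε k) (θ (k - 1) - θstar)
      have h2 := neg_abs_le ⟪ε k, θ (k - 1) - θstar⟫
      linarith
    -- decompose G = g - ε
    have hGg : G (θmd k) = gk - ε k := by rw [hgk]; abel
    have h1a : β k * ⟪G (θmd k), gk⟫ = β k * ‖gk‖ ^ 2 - β k * ⟪ε k, gk⟫ := by
      rw [hGg, inner_sub_left, real_inner_self_eq_norm_sq]; ring
    have h2a : α k * ⟪G (θmd k), θ (k - 1) - θstar⟫
        = α k * ⟪gk, θ (k - 1) - θstar⟫ - α k * ⟪ε k, θ (k - 1) - θstar⟫ := by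
      rw [hGg, inner_sub_left]; ring
    have hg2 : (0:ℝ) ≤ ‖gk‖ ^ 2 := by positivity
    have hquad : α k * lam k / 2 * ‖gk‖ ^ 2 - β k * ‖gk‖ ^ 2 + L * β k ^ 2 / 2 * ‖gk‖ ^ 2 ≤ 0 := by
      nlinarith [mul_nonneg (sub_nonneg.2 hs1) hg2,
        mul_nonneg (mul_nonneg hb.le (sub_nonneg.2 hs2)) hg2]
    have hb4 : β k * ⟪ε k, gk⟫ ≤ β k * (‖ε k‖ * ‖gk‖) :=
      mul_le_mul_of_nonneg_left F4 hb.le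
    have ha5 : α k * -⟪ε k, θ (k - 1) - θstar⟫ ≤ α k * (‖ε k‖ * ‖θ (k - 1) - θstar‖) :=
      mul_le_mul_of_nonneg_left F5 ha.le
    linarith [F1, F2, h1a, h2a, hdiv, hquad, hb4, ha5]
  -- invariant by induction
  have main : ∀ N, 1 ≤ N →
      (ℓ (θag N) - ℓ θstar) / Γ N + s (N + 1) / 2 * r N
        ≤ r 0 / (2 * lam 1) + ∑ k ∈ Finset.Icc 1 N, (Γ k)⁻¹ *
            (β k * ‖ε k‖ * ‖G (θmd k) + ε k‖ + α k * ‖ε k‖ * ‖θ (k - 1) - θstar‖) := by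
    intro N
    induction N with
    | zero => omega
    | succ n ih =>
      intro _
      rcases Nat.lt_or_ge n 1 with hn | hn
      · -- base case N = 1
        interval_cases n
        have hkey := key 1 le_rfl
        rw [hα1] at hkey
        simp only [Finset.Icc_self, Finset.sum_singleton, hΓ1]
        have hs1v : s 1 = 1 / lam 1 := by rw [hsdef]; simp [hα1, hΓ1]
        have hs21 : s 2 ≤ s 1 := by simpa [hsdef] using hmono 1 le_rfl
        have hprod : s 2 / 2 * r 1 ≤ s 1 / 2 * r 1 :=
          mul_le_mul_of_nonneg_right (by linarith) (hrnn 1)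
        have hl1 := hlam 1 le_rfl
        have he1 : (1:ℝ)⁻¹ * (β 1 * ‖ε 1‖ * ‖G (θmd 1) + ε 1‖
            + α 1 * ‖ε 1‖ * ‖θ 0 - θstar‖)
            = β 1 * ‖ε 1‖ * ‖G (θmd 1) + ε 1‖ + α 1 * ‖ε 1‖ * ‖θ 0 - θstar‖ := by
          rw [inv_one, one_mul]
        have hsplit : (1:ℝ) / (2 * lam 1) * (r 0 - r 1)
            = r 0 / (2 * lam 1) - (1 / lam 1) / 2 * r 1 := by ring
        rw [hsplit] at hkey
        rw [hs1v] at hprod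
        simp only [Nat.sub_self] at hkey
        norm_num [hα1]
        linarith [hkey, hprod]
      · -- inductive step, n ≥ 1
        have ihn := ih hn
        have hkey := key (n + 1) (by omega)
        have hone : (0:ℝ) < 1 - α (n + 1) := by
          have := hαlt (n + 1) (by omega); linarith
        have hΓn := hΓpos n hn
        have hΓ' : Γ (n + 1) = (1 - α (n + 1)) * Γ n := by
          have := hΓ (n + 1) (by omega)
          simpa using this
        have hΓ'pos : 0 < Γ (n + 1) := hΓpos (n + 1) (by omega)
        have hl' := hlam (n + 1) (by omega)
        have hsucc : (n + 1) - 1 = n := by omega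
        rw [hsucc] at hkey
        -- divide key by Γ (n+1)
        have h1 : (ℓ (θag (n + 1)) - ℓ θstar) / Γ (n + 1)
            ≤ ((1 - α (n + 1)) * (ℓ (θag n) - ℓ θstar)
              + α (n + 1) / (2 * lam (n + 1)) * (r n - r (n + 1))
              + (β (n+1) * ‖ε (n+1)‖ * ‖G (θmd (n+1)) + ε (n+1)‖
                 + α (n+1) * ‖ε (n+1)‖ * ‖θ n - θstar‖)) / Γ (n + 1) := by
          gcongr
        have heq : ((1 - α (n + 1)) * (ℓ (θag n) - ℓ θstar)
              + α (n + 1) / (2 * lam (n + 1)) * (r n - r (n + 1))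
              + (β (n+1) * ‖ε (n+1)‖ * ‖G (θmd (n+1)) + ε (n+1)‖
                 + α (n+1) * ‖ε (n+1)‖ * ‖θ n - θstar‖)) / Γ (n + 1)
            = (ℓ (θag n) - ℓ θstar) / Γ n + s (n + 1) / 2 * (r n - r (n + 1))
              + (Γ (n + 1))⁻¹ * (β (n+1) * ‖ε (n+1)‖ * ‖G (θmd (n+1)) + ε (n+1)‖
                 + α (n+1) * ‖ε (n+1)‖ * ‖θ n - θstar‖) := by
          rw [hsdef]
          simp only
          rw [hΓ']
          field_simp
        rw [heq] at h1
        have hs21 : s (n + 2) ≤ s (n + 1) := by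
          simpa [hsdef] using hmono (n + 1) (by omega)
        have hprod : s (n + 2) / 2 * r (n + 1) ≤ s (n + 1) / 2 * r (n + 1) :=
          mul_le_mul_of_nonneg_right (by linarith) (hrnn (n + 1))
        rw [Finset.sum_Icc_succ_top (by omega : 1 ≤ n + 1)]
        rw [hsucc]
        linarith [h1, ihn, hprod]
  -- final assembly
  intro N hN
  have hm := main N hN
  have hΓN := hΓpos N hN
  have hsN := hspos (N + 1) (by omega)
  have hrN := hrnn N
  have hl1 := hlam 1 le_rfl
  have hnn : 0 ≤ s (N + 1) / 2 * r N := by positivity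
  have hr0 : r 0 = ‖θ 0 - θstar‖ ^ 2 := by rw [hrdef]
  have hhalf : r 0 / (2 * lam 1) = (r 0 / lam 1) / 2 := by ring
  have hr0nn : 0 ≤ r 0 / lam 1 := by positivity
  have h1 : (ℓ (θag N) - ℓ θstar) / Γ N
      ≤ ‖θ 0 - θstar‖ ^ 2 / lam 1 + ∑ k ∈ Finset.Icc 1 N, (Γ k)⁻¹ *
          (β k * ‖ε k‖ * ‖G (θmd k) + ε k‖ + α k * ‖ε k‖ * ‖θ (k - 1) - θstar‖) := by
    rw [← hr0]
    linarith [hm, hnn, hhalf, hr0nn]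
  have h2 := mul_le_mul_of_nonneg_left h1 hΓN.le
  have h3 : Γ N * ((ℓ (θag N) - ℓ θstar) / Γ N) = ℓ (θag N) - ℓ θstar := by
    field_simp
  linarith [h2, h3.ge, h3.le]
end

section
/- Under the hypotheses of the convex case of the accelerated inexact gradient theorem (α_k λ_k ≤ β_k < 1/L, {α_k/(λ_k Γ_k)} non-increasing), for any N ≥ 1, min_{k=1,…,N} ‖∇ℓ(θ_k^{md}) + ε_k‖² ≤ 2 [ ‖θ* − θ_0‖²/(2λ_1) + Σ_{k=1}^{N} Γ_k^{-1}( β_k‖ε_k‖‖∇ℓ(θ_k^{md}) + ε_k‖ + α_k‖ε_k‖‖θ_{k-1} − θ*‖ ) ] / Σ_{k=1}^{N} Γ_k^{-1} β_k (1 − Lβ_k). -/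
/-!
With `g_k = ∇ℓ(θ_k^{md}) + ε_k`, the potential
`Φ_k = 2 Γ_k⁻¹ (ℓ(θ_k^{ag}) - ℓ(θ*)) + α_k / (λ_k Γ_k) ‖θ_k - θ*‖²`
satisfies `Φ_k + Γ_k⁻¹ β_k (1 - L β_k) ‖g_k‖² ≤ Φ_{k-1} + 2 Γ_k⁻¹ (error terms)`. This combines
the descent lemma at `θ_k^{ag}`, first-order convexity at `θ_k^{md}` (tested against
`θ_{k-1}^{ag}` and `θ*`) and the expansion of `‖θ_k - θ*‖²`, with Cauchy–Schwarz on the errors;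
`(1 - α_k) Γ_k⁻¹ = Γ_{k-1}⁻¹` and the monotonicity of `α_k / (λ_k Γ_k)` make it telescope.
As `Φ_N ≥ 0`, the `Γ_k⁻¹ β_k (1 - L β_k)`-weighted sum of the `‖g_k‖²` is bounded, hence so is
the smallest `‖g_k‖²` by the weighted average.
-/

open Set Finset
open scoped RealInnerProductSpace

section FirstOrder

variable {E : Type*} [NormedAddCommGroup E] [InnerProductSpace ℝ E] [CompleteSpace E]

theorem HasGradientAt.hasDerivAt_comp_add_smul {f : E → ℝ} {f' x v : E} {t : ℝ}
    (h : HasGradientAt f f' (x + t • v)) :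
    HasDerivAt (fun s : ℝ => f (x + s • v)) ⟪f', v⟫ t := by
  have hline : HasDerivAt (fun s : ℝ => x + s • v) v t := by
    simpa using ((hasDerivAt_id t).smul_const v).const_add x
  simpa [InnerProductSpace.toDual_apply_apply, Function.comp_def] using
    h.hasFDerivAt.comp_hasDerivAt t hline

theorem ConvexOn.add_inner_le_of_hasGradientAt {f : E → ℝ} {f' x : E}
    (hf : ConvexOn ℝ univ f) (h : HasGradientAt f f' x) (y : E) :
    f x + ⟪f', y - x⟫ ≤ f y := by
  have hline : ConvexOn ℝ univ (fun t : ℝ => f (x + t • (y - x))) := by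
    simpa [Function.comp_def, AffineMap.lineMap_apply, add_comm] using
      hf.comp_affineMap (AffineMap.lineMap x y)
  have hder : HasDerivAt (fun t : ℝ => f (x + t • (y - x))) ⟪f', y - x⟫ 0 :=
    HasGradientAt.hasDerivAt_comp_add_smul (by simpa using h)
  have := hline.le_slope_of_hasDerivAt (mem_univ 0) (mem_univ 1) zero_lt_one hder
  simp only [slope_def_field, one_smul, zero_smul, add_zero, add_sub_cancel] at this
  linarith

theorem ConvexOn.apply_le_of_hasGradientAt_of_eq_add_smul {f : E → ℝ} {f' m u v : E} {a : ℝ}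
    (hf : ConvexOn ℝ univ f) (h : HasGradientAt f f' m) (ha0 : 0 ≤ a) (ha1 : a ≤ 1)
    (hm : m = (1 - a) • u + a • v) (z : E) :
    f m ≤ (1 - a) * f u + a * f z + a * ⟪f', v - z⟫ := by
  have hu := mul_le_mul_of_nonneg_left (hf.add_inner_le_of_hasGradientAt h u) (sub_nonneg.2 ha1)
  have hz := mul_le_mul_of_nonneg_left (hf.add_inner_le_of_hasGradientAt h z) ha0
  have hdir : (1 - a) • (u - m) + a • (z - m) = -(a • (v - z)) := by rw [hm]; module
  have hinner : (1 - a) * ⟪f', u - m⟫ + a * ⟪f', z - m⟫ = -(a * ⟪f', v - z⟫) := by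
    rw [← real_inner_smul_right, ← real_inner_smul_right, ← inner_add_right, hdir,
      inner_neg_right, real_inner_smul_right]
  linarith

theorem apply_le_add_inner_add_sq_of_lipschitz_gradient {f : E → ℝ} {G : E → E} {L : ℝ}
    (hgrad : ∀ x, HasGradientAt f (G x) x) (hLip : ∀ x y, ‖G x - G y‖ ≤ L * ‖x - y‖) (x y : E) :
    f y ≤ f x + ⟪G x, y - x⟫ + L / 2 * ‖y - x‖ ^ 2 := by
  set v := y - x
  let ψ : ℝ → ℝ := fun t => f (x + t • v) - t * ⟪G x, v⟫ - L / 2 * ‖v‖ ^ 2 * t ^ 2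
  have hψ : ∀ t, HasDerivAt ψ (⟪G (x + t • v), v⟫ - ⟪G x, v⟫ - L * ‖v‖ ^ 2 * t) t := by
    intro t
    have h : HasDerivAt ψ (⟪G (x + t • v), v⟫ - 1 * ⟪G x, v⟫
        - L / 2 * ‖v‖ ^ 2 * (↑2 * t ^ (2 - 1))) t :=
      (((hgrad _).hasDerivAt_comp_add_smul).sub ((hasDerivAt_id t).mul_const _)).sub
        ((hasDerivAt_pow 2 t).const_mul _)
    exact h.congr_deriv (by ring)
  have hψ' : ∀ t, 0 < t → ⟪G (x + t • v), v⟫ - ⟪G x, v⟫ - L * ‖v‖ ^ 2 * t ≤ 0 := by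
    intro t ht
    have hcs := real_inner_le_norm (G (x + t • v) - G x) v
    have hlip := hLip (x + t • v) x
    rw [add_sub_cancel_left, norm_smul, Real.norm_eq_abs, abs_of_pos ht] at hlip
    rw [inner_sub_left] at hcs
    nlinarith [norm_nonneg v]
  have hanti : AntitoneOn ψ (Set.Ici 0) :=
    antitoneOn_of_hasDerivWithinAt_nonpos (convex_Ici (0 : ℝ))
      (HasDerivAt.continuousOn fun t _ => hψ t) (fun t _ => (hψ t).hasDerivWithinAt)
      (by simpa using hψ')
  have h01 := hanti Set.self_mem_Ici (Set.mem_Ici.2 zero_le_one) zero_le_one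
  simp only [ψ, v, one_smul, zero_smul, add_zero, add_sub_cancel] at h01
  linarith

end FirstOrder

theorem Finset.exists_le_div_sum_of_sum_mul_le {ι K : Type*} [Field K] [LinearOrder K]
    [IsStrictOrderedRing K] {s : Finset ι} {w x : ι → K} {C : K} (hs : s.Nonempty)
    (hw : ∀ i ∈ s, 0 < w i) (h : ∑ i ∈ s, w i * x i ≤ C) :
    ∃ i ∈ s, x i ≤ C / ∑ i ∈ s, w i := by
  have hW : 0 < ∑ i ∈ s, w i := sum_pos hw hs
  obtain ⟨i, hi, hle⟩ := exists_le_of_sum_le hs (f := fun i => w i * x i)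
    (g := fun i => w i * (C / ∑ i ∈ s, w i)) (by rwa [← sum_mul, mul_div_cancel₀ _ hW.ne'])
  exact ⟨i, hi, le_of_mul_le_mul_left hle (hw i hi)⟩

theorem add_sum_Icc_le_of_succ_le {Φ c e : ℕ → ℝ} {A : ℝ} (h1 : Φ 1 + c 1 ≤ A + e 1)
    (hsucc : ∀ k, 1 ≤ k → Φ (k + 1) + c (k + 1) ≤ Φ k + e (k + 1)) {N : ℕ} (hN : 1 ≤ N) :
    Φ N + ∑ j ∈ Icc 1 N, c j ≤ A + ∑ j ∈ Icc 1 N, e j := by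
  induction N, hN using Nat.le_induction with
  | base => simpa using h1
  | succ n hn ih =>
    rw [sum_Icc_succ_top (by omega), sum_Icc_succ_top (by omega)]
    linarith [hsucc n hn]

namespace AcceleratedInexactGradient

variable {E : Type*} [NormedAddCommGroup E]

noncomputable def potential (f : E → ℝ) (z : E) (α Γ lam : ℕ → ℝ) (θ θag : ℕ → E) (k : ℕ) : ℝ :=
  2 * (Γ k)⁻¹ * (f (θag k) - f z) + α k / (lam k * Γ k) * ‖θ k - z‖ ^ 2

theorem potential_nonneg {f : E → ℝ} {z : E} {α Γ lam : ℕ → ℝ} {θ θag : ℕ → E} {k : ℕ}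
    (hz : f z ≤ f (θag k)) (hα : 0 ≤ α k) (hlam : 0 ≤ lam k) (hΓ : 0 ≤ Γ k) :
    0 ≤ potential f z α Γ lam θ θag k := by
  have := sub_nonneg.2 hz
  unfold potential
  positivity

variable [InnerProductSpace ℝ E] [CompleteSpace E]

theorem step_le {f : E → ℝ} {G : E → E} {L : ℝ} (hgrad : ∀ x, HasGradientAt f (G x) x)
    (hLip : ∀ x y, ‖G x - G y‖ ≤ L * ‖x - y‖) (hconv : ConvexOn ℝ univ f)
    {a lam b : ℝ} (ha0 : 0 ≤ a) (ha1 : a ≤ 1) (hlam : 0 < lam) (hb : 0 ≤ b) (hab : a * lam ≤ b)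
    {z u v m v' w e : E} (hm : m = (1 - a) • u + a • v) (hv' : v' = v - lam • (G m + e))
    (hw : w = m - b • (G m + e)) :
    2 * (f w - f z) + a / lam * ‖v' - z‖ ^ 2 + b * (1 - L * b) * ‖G m + e‖ ^ 2
      ≤ 2 * (1 - a) * (f u - f z) + a / lam * ‖v - z‖ ^ 2
        + 2 * (b * ‖e‖ * ‖G m + e‖ + a * ‖e‖ * ‖v - z‖) := by
  set g := G m + e
  have hdescent : f w ≤ f m - b * (‖g‖ ^ 2 - ⟪e, g⟫) + L / 2 * b ^ 2 * ‖g‖ ^ 2 := by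
    have h := apply_le_add_inner_add_sq_of_lipschitz_gradient hgrad hLip m w
    have hGm : ⟪G m, g⟫ = ‖g‖ ^ 2 - ⟪e, g⟫ := by
      rw [show G m = g - e by simp [g], inner_sub_left, real_inner_self_eq_norm_sq]
    rw [hw, sub_sub_cancel_left, inner_neg_right, real_inner_smul_right, norm_neg, norm_smul,
      Real.norm_eq_abs, mul_pow, sq_abs, hGm] at h
    rw [hw]
    linarith
  have hconvex := hconv.apply_le_of_hasGradientAt_of_eq_add_smul (hgrad m) ha0 ha1 hm z
  have hsplit : a * ⟪G m, v - z⟫ = a * ⟪g, v - z⟫ - a * ⟪e, v - z⟫ := by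
    rw [inner_add_left]
    ring
  have hdist : a / lam * ‖v' - z‖ ^ 2
      = a / lam * ‖v - z‖ ^ 2 - 2 * a * ⟪g, v - z⟫ + a * lam * ‖g‖ ^ 2 := by
    rw [hv', sub_right_comm, norm_sub_sq_real, real_inner_smul_right, norm_smul,
      Real.norm_eq_abs, mul_pow, sq_abs, real_inner_comm]
    field_simp
  have hcs₁ : ⟪e, g⟫ ≤ ‖e‖ * ‖g‖ := real_inner_le_norm _ _
  have hcs₂ : -⟪e, v - z⟫ ≤ ‖e‖ * ‖v - z‖ := by
    simpa [inner_neg_left] using real_inner_le_norm (-e) (v - z)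
  linarith [mul_le_mul_of_nonneg_left hcs₁ hb, mul_le_mul_of_nonneg_left hcs₂ ha0,
    mul_le_mul_of_nonneg_right hab (sq_nonneg ‖g‖)]

theorem weight_mem_Icc {α : ℕ → ℝ} (hα1 : α 1 = 1) (hα : ∀ k, 2 ≤ k → α k ∈ Ioo (0 : ℝ) 1)
    {k : ℕ} (hk : 1 ≤ k) : α k ∈ Icc (0 : ℝ) 1 := by
  rcases hk.eq_or_lt with rfl | hk
  · simp [hα1]
  · exact Ioo_subset_Icc_self (hα k hk)

theorem pos_of_eq_one_sub_mul {α Γ : ℕ → ℝ} (hΓ1 : Γ 1 = 1)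
    (hΓ : ∀ k, 2 ≤ k → Γ k = (1 - α k) * Γ (k - 1)) (hα : ∀ k, 2 ≤ k → α k < 1)
    {k : ℕ} (hk : 1 ≤ k) : 0 < Γ k := by
  induction k, hk using Nat.le_induction with
  | base => rw [hΓ1]; exact one_pos
  | succ n hn ih =>
    rw [hΓ (n + 1) (by omega), Nat.add_sub_cancel]
    exact mul_pos (sub_pos.2 (hα _ (by omega))) ih

theorem potential_le {f : E → ℝ} {G : E → E} {L : ℝ} (hgrad : ∀ x, HasGradientAt f (G x) x)
    (hLip : ∀ x y, ‖G x - G y‖ ≤ L * ‖x - y‖) (hconv : ConvexOn ℝ univ f) (z : E)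
    {α Γ lam β : ℕ → ℝ} (hα1 : α 1 = 1) (hα : ∀ k, 2 ≤ k → α k ∈ Ioo (0 : ℝ) 1)
    (hΓ1 : Γ 1 = 1) (hΓ : ∀ k, 2 ≤ k → Γ k = (1 - α k) * Γ (k - 1))
    (hlam : ∀ k, 1 ≤ k → 0 < lam k) (hβ : ∀ k, 1 ≤ k → 0 ≤ β k)
    (hstep : ∀ k, 1 ≤ k → α k * lam k ≤ β k)
    (hmono : ∀ k, 1 ≤ k → α (k + 1) / (lam (k + 1) * Γ (k + 1)) ≤ α k / (lam k * Γ k))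
    {θ θag θmd ε : ℕ → E}
    (hmd : ∀ k, 1 ≤ k → θmd k = (1 - α k) • θag (k - 1) + α k • θ (k - 1))
    (hθ : ∀ k, 1 ≤ k → θ k = θ (k - 1) - lam k • (G (θmd k) + ε k))
    (hag : ∀ k, 1 ≤ k → θag k = θmd k - β k • (G (θmd k) + ε k)) {N : ℕ} (hN : 1 ≤ N) :
    potential f z α Γ lam θ θag N
        + ∑ j ∈ Icc 1 N, (Γ j)⁻¹ * (β j * (1 - L * β j)) * ‖G (θmd j) + ε j‖ ^ 2
      ≤ ‖θ 0 - z‖ ^ 2 / lam 1 + ∑ j ∈ Icc 1 N, 2 * ((Γ j)⁻¹ *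
          (β j * ‖ε j‖ * ‖G (θmd j) + ε j‖ + α j * ‖ε j‖ * ‖θ (j - 1) - z‖)) := by
  have hscaled : ∀ k, 1 ≤ k →
      2 * (Γ k)⁻¹ * (f (θag k) - f z) + α k / (lam k * Γ k) * ‖θ k - z‖ ^ 2
          + (Γ k)⁻¹ * (β k * (1 - L * β k)) * ‖G (θmd k) + ε k‖ ^ 2
        ≤ 2 * ((1 - α k) * (Γ k)⁻¹) * (f (θag (k - 1)) - f z)
          + α k / (lam k * Γ k) * ‖θ (k - 1) - z‖ ^ 2 + 2 * ((Γ k)⁻¹ *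
            (β k * ‖ε k‖ * ‖G (θmd k) + ε k‖ + α k * ‖ε k‖ * ‖θ (k - 1) - z‖)) := by
    intro k hk
    have h := mul_le_mul_of_nonneg_left
      (step_le hgrad hLip hconv (weight_mem_Icc hα1 hα hk).1 (weight_mem_Icc hα1 hα hk).2
        (hlam k hk) (hβ k hk) (hstep k hk) (hmd k hk) (hθ k hk) (hag k hk) (z := z))
      (inv_pos.2 (pos_of_eq_one_sub_mul hΓ1 hΓ (fun k hk => (hα k hk).2) hk)).le
    rw [div_mul_eq_div_div, div_eq_inv_mul _ (Γ k)]
    linarith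
  refine add_sum_Icc_le_of_succ_le ?_ ?_ hN
  · -- `α 1 = 1` removes the `θag 0` term
    have h := hscaled 1 le_rfl
    simp only [potential, hα1, hΓ1, Nat.sub_self, sub_self, zero_mul, mul_zero, mul_one, inv_one,
      div_eq_inv_mul] at h ⊢
    linarith
  · intro k hk
    have h := hscaled (k + 1) (by omega)
    have hΓrec : (1 - α (k + 1)) * (Γ (k + 1))⁻¹ = (Γ k)⁻¹ := by
      rw [hΓ (k + 1) (by omega), Nat.add_sub_cancel, mul_inv, ← mul_assoc,
        mul_inv_cancel₀ (sub_pos.2 (hα _ (by omega)).2).ne', one_mul]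
    simp only [potential, Nat.add_sub_cancel] at h ⊢
    rw [hΓrec] at h
    linarith [mul_le_mul_of_nonneg_right (hmono k hk) (sq_nonneg ‖θ k - z‖)]

end AcceleratedInexactGradient

theorem stmt_14_general {d : ℕ}
    (ℓ : EuclideanSpace ℝ (Fin d) → ℝ)
    (G : EuclideanSpace ℝ (Fin d) → EuclideanSpace ℝ (Fin d))
    (L : ℝ) (hL : 0 < L)
    (hgrad : ∀ θ, HasGradientAt ℓ (G θ) θ)
    (hLip : ∀ θ ϑ, ‖G θ - G ϑ‖ ≤ L * ‖θ - ϑ‖)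
    (hconv : ConvexOn ℝ Set.univ ℓ)
    (θstar : EuclideanSpace ℝ (Fin d))
    (hopt : ∀ θ, ℓ θstar ≤ ℓ θ)
    (α Γ lam β : ℕ → ℝ)
    (hα1 : α 1 = 1)
    (hα : ∀ k, 2 ≤ k → α k ∈ Set.Ioo (0 : ℝ) 1)
    (hΓ1 : Γ 1 = 1)
    (hΓ : ∀ k, 2 ≤ k → Γ k = (1 - α k) * Γ (k - 1))
    (hlam : ∀ k, 1 ≤ k → 0 < lam k)
    (hβpos : ∀ k, 1 ≤ k → 0 < β k)
    (hstep : ∀ k, 1 ≤ k → α k * lam k ≤ β k ∧ β k < 1 / L)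
    (hmono : ∀ k, 1 ≤ k → α (k + 1) / (lam (k + 1) * Γ (k + 1)) ≤ α k / (lam k * Γ k))
    (θ θag θmd ε : ℕ → EuclideanSpace ℝ (Fin d))
    (hmd : ∀ k, 1 ≤ k → θmd k = (1 - α k) • θag (k - 1) + α k • θ (k - 1))
    (hθ : ∀ k, 1 ≤ k → θ k = θ (k - 1) - lam k • (G (θmd k) + ε k))
    (hag : ∀ k, 1 ≤ k → θag k = θmd k - β k • (G (θmd k) + ε k)) :
    ∀ N : ℕ, 1 ≤ N →
      ∃ k ∈ Finset.Icc 1 N,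
        ‖G (θmd k) + ε k‖ ^ 2
          ≤ 2 * (‖θstar - θ 0‖ ^ 2 / (2 * lam 1)
              + ∑ j ∈ Finset.Icc 1 N, (Γ j)⁻¹ *
                  (β j * ‖ε j‖ * ‖G (θmd j) + ε j‖
                    + α j * ‖ε j‖ * ‖θ (j - 1) - θstar‖))
            / ∑ j ∈ Finset.Icc 1 N, (Γ j)⁻¹ * (β j * (1 - L * β j)) := by
  intro N hN
  have hΓpos {k : ℕ} (hk : 1 ≤ k) : 0 < Γ k :=
    AcceleratedInexactGradient.pos_of_eq_one_sub_mul hΓ1 hΓ (fun k hk => (hα k hk).2) hk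
  have hweight : ∀ j ∈ Finset.Icc 1 N, 0 < (Γ j)⁻¹ * (β j * (1 - L * β j)) := by
    intro j hj
    have hj := (Finset.mem_Icc.1 hj).1
    have hLβ : L * β j < 1 := by rw [mul_comm, ← lt_div_iff₀ hL]; exact (hstep j hj).2
    exact mul_pos (inv_pos.2 (hΓpos hj)) (mul_pos (hβpos j hj) (sub_pos.2 hLβ))
  have hsum := le_of_add_le_of_nonneg_right
    (AcceleratedInexactGradient.potential_le hgrad hLip hconv θstar hα1 hα hΓ1 hΓ hlam
      (fun k hk => (hβpos k hk).le) (fun k hk => (hstep k hk).1) hmono hmd hθ hag hN)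
    (AcceleratedInexactGradient.potential_nonneg (hopt _)
      (AcceleratedInexactGradient.weight_mem_Icc hα1 hα hN).1 (hlam N hN).le (hΓpos hN).le)
  obtain ⟨k, hk, hle⟩ :=
    Finset.exists_le_div_sum_of_sum_mul_le ⟨1, Finset.mem_Icc.2 ⟨le_rfl, hN⟩⟩ hweight hsum
  refine ⟨k, hk, hle.trans_eq ?_⟩
  rw [norm_sub_rev, ← Finset.mul_sum, mul_add]
  congr 2
  field_simp

/-- Convex case, gradient-norm bound: under the hypotheses of the convex accelerated
inexact gradient theorem, `min_{k≤N} ‖∇ℓ(θ_k^{md})+ε_k‖²` is bounded by the stated ratio. -/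
theorem stmt_14 {d : ℕ}
    (ℓ : EuclideanSpace ℝ (Fin d) → ℝ)
    (G : EuclideanSpace ℝ (Fin d) → EuclideanSpace ℝ (Fin d))
    (L : ℝ) (hL : 0 < L)
    (hgrad : ∀ θ, HasGradientAt ℓ (G θ) θ)
    (hLip : ∀ θ ϑ, ‖G θ - G ϑ‖ ≤ L * ‖θ - ϑ‖)
    (hconv : ConvexOn ℝ Set.univ ℓ)
    (θstar : EuclideanSpace ℝ (Fin d))
    (hopt : ∀ θ, ℓ θstar ≤ ℓ θ)
    (α Γ lam β : ℕ → ℝ)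
    (hα1 : α 1 = 1)
    (hα : ∀ k, 2 ≤ k → α k ∈ Set.Ioo (0 : ℝ) 1)
    (hΓ1 : Γ 1 = 1)
    (hΓ : ∀ k, 2 ≤ k → Γ k = (1 - α k) * Γ (k - 1))
    (hlam : ∀ k, 1 ≤ k → 0 < lam k)
    (hβpos : ∀ k, 1 ≤ k → 0 < β k)
    (hstep : ∀ k, 1 ≤ k → α k * lam k ≤ β k ∧ β k < 1 / L)
    (hmono : ∀ k, 1 ≤ k → α (k + 1) / (lam (k + 1) * Γ (k + 1)) ≤ α k / (lam k * Γ k))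
    (θ θag θmd ε : ℕ → EuclideanSpace ℝ (Fin d))
    (h0 : θag 0 = θ 0)
    (hmd : ∀ k, 1 ≤ k → θmd k = (1 - α k) • θag (k - 1) + α k • θ (k - 1))
    (hθ : ∀ k, 1 ≤ k → θ k = θ (k - 1) - lam k • (G (θmd k) + ε k))
    (hag : ∀ k, 1 ≤ k → θag k = θmd k - β k • (G (θmd k) + ε k)) :
    ∀ N : ℕ, 1 ≤ N →
      ∃ k ∈ Finset.Icc 1 N,
        ‖G (θmd k) + ε k‖ ^ 2
          ≤ 2 * (‖θstar - θ 0‖ ^ 2 / (2 * lam 1)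
              + ∑ j ∈ Finset.Icc 1 N, (Γ j)⁻¹ *
                  (β j * ‖ε j‖ * ‖G (θmd j) + ε j‖
                    + α j * ‖ε j‖ * ‖θ (j - 1) - θstar‖))
            / ∑ j ∈ Finset.Icc 1 N, (Γ j)⁻¹ * (β j * (1 - L * β j)) :=
  stmt_14_general ℓ G L hL hgrad hLip hconv θstar hopt α Γ lam β hα1 hα hΓ1 hΓ hlam hβpos hstep
    hmono θ θag θmd ε hmd hθ hag
end
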